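/- Let Ω be a nonempty set and Σ : Ω × Ω → ℝ a symmetric function (Σ(P,Q) = Σ(Q,P)) with Σ(P,P) = 0 for all P. Then there exists an injective map f : Ω → EuclideanSpace ℝ (Fin n) with Σ(P,Q) = ½‖f(P) − f(Q)‖² for all P,Q ∈ Ω if and only if for every subset Ω' ⊆ Ω with at most n+3 points there exists an injective map f' : Ω' → EuclideanSpace ℝ (Fin n) with Σ(P,Q) = ½‖f'(P) − f'(Q)‖² for all P,Q ∈ Ω'. (Theorem 1, Menger's embedding criterion: a symmetric Σ-space is isometrically embeddable in n-dimensional proper Euclidean space iff every (n+2)th order Σ-subspace, i.e. every subset of n+3 points, is.) -/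

import Mathlib

/-!
Choose points `a₀, …, aₘ` with `m` maximal such that some realization `g` of them has linearly
independent edge vectors `g aᵢ - g a₀`. Since `⟪f P - f R, f Q - f R⟫ = W P R + W Q R - W P Q`
for every realization `f`, all realizations of the frame have the same Gram matrix. Given `P, Q`,
realize the `m + 3` points `a₀, …, aₘ, P, Q` by some `f`; by maximality `f P - f a₀` and
`f Q - f a₀` lie in the span of the frame, and transporting their coefficients to `g` gives two
vectors of `span (g aᵢ - g a₀)` at the right distance. Their inner products with the frame are prescribed by
`W`, so they do not depend on the pair, and they define the embedding.
-/

open Submodule Matrix Set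
open scoped RealInnerProductSpace

section Gram

variable {ι F : Type*} [NormedAddCommGroup F] [InnerProductSpace ℝ F] {v w : ι → F}

theorem eq_of_mem_span_of_inner_eq {x y : F} (hx : x ∈ span ℝ (range v))
    (hy : y ∈ span ℝ (range v)) (h : ∀ i, ⟪x, v i⟫ = ⟪y, v i⟫) : x = y := by
  have hperp : x - y ∈ (ℝ ∙ (x - y))ᗮ :=
    span_le.2 (range_subset_iff.2 fun i => mem_orthogonal_singleton_iff_inner_right.2
      (by rw [inner_sub_left, h i, sub_self])) (sub_mem hx hy)
  exact sub_eq_zero.1 (inner_self_eq_zero.1 (mem_orthogonal_singleton_iff_inner_right.1 hperp))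

variable [Fintype ι]

theorem inner_sum_smul_left_eq_of_gram_eq (h : gram ℝ v = gram ℝ w) (c : ι → ℝ) (j : ι) :
    ⟪∑ i, c i • v i, v j⟫ = ⟪∑ i, c i • w i, w j⟫ := by
  simp only [sum_inner, real_inner_smul_left]
  exact Finset.sum_congr rfl fun i _ => congrArg (c i * ·) (congrFun₂ h i j)

theorem norm_sum_smul_eq_of_gram_eq (h : gram ℝ v = gram ℝ w) (c : ι → ℝ) :
    ‖∑ i, c i • v i‖ = ‖∑ i, c i • w i‖ := by
  rw [← sq_eq_sq₀ (norm_nonneg _) (norm_nonneg _), ← real_inner_self_eq_norm_sq,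
    ← real_inner_self_eq_norm_sq, ← star_dotProduct_gram_mulVec, h, star_dotProduct_gram_mulVec]

end Gram

section Realization

variable {Ω ι : Type*} {W : Ω → Ω → ℝ} {E : Type*} [NormedAddCommGroup E]

/-- Unlike an isometric embedding, `f` need not be injective on `S`. -/
def IsometricOn (W : Ω → Ω → ℝ) (f : Ω → E) (S : Set Ω) : Prop :=
  ∀ P ∈ S, ∀ Q ∈ S, W P Q = 1 / 2 * ‖f P - f Q‖ ^ 2

theorem IsometricOn.mono {f : Ω → E} {S T : Set Ω} (hf : IsometricOn W f T) (hST : S ⊆ T) :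
    IsometricOn W f S :=
  fun P hP Q hQ => hf P (hST hP) Q (hST hQ)

open Classical in
theorem exists_isometricOn_of_subtype {S : Set Ω} (f : S → E)
    (hf : ∀ P Q : S, W P Q = 1 / 2 * ‖f P - f Q‖ ^ 2) : ∃ g : Ω → E, IsometricOn W g S :=
  ⟨fun P => if h : P ∈ S then f ⟨P, h⟩ else 0, fun P hP Q hQ => by
    simpa only [dif_pos hP, dif_pos hQ] using hf ⟨P, hP⟩ ⟨Q, hQ⟩⟩

variable [InnerProductSpace ℝ E]

theorem IsometricOn.inner_sub_sub {f : Ω → E} {S : Set Ω} (hf : IsometricOn W f S) {P Q R : Ω}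
    (hP : P ∈ S) (hQ : Q ∈ S) (hR : R ∈ S) :
    ⟪f P - f R, f Q - f R⟫ = W P R + W Q R - W P Q := by
  rw [hf P hP R hR, hf Q hQ R hR, hf P hP Q hQ, sq, sq, sq,
    real_inner_eq_norm_mul_self_add_norm_mul_self_sub_norm_sub_mul_self_div_two,
    sub_sub_sub_cancel_right]
  ring

theorem IsometricOn.gram_eq {f g : Ω → E} {a₀ : Ω} {a : ι → Ω}
    (hf : IsometricOn W f (insert a₀ (range a))) (hg : IsometricOn W g (insert a₀ (range a))) :
    gram ℝ (fun i => f (a i) - f a₀) = gram ℝ (fun i => g (a i) - g a₀) := by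
  have ha₀ : a₀ ∈ insert a₀ (range a) := mem_insert _ _
  have ha i : a i ∈ insert a₀ (range a) := mem_insert_of_mem _ (mem_range_self i)
  ext i j
  rw [gram_apply, gram_apply, hf.inner_sub_sub (ha i) (ha j) ha₀,
    hg.inner_sub_sub (ha i) (ha j) ha₀]

variable (W E) in
def HasIndependentFrame (m : ℕ) : Prop :=
  ∃ (a₀ : Ω) (a : Fin m → Ω) (f : Ω → E),
    IsometricOn W f (insert a₀ (range a)) ∧ LinearIndependent ℝ fun i => f (a i) - f a₀

theorem hasIndependentFrame_zero [Nonempty Ω] (hW : ∀ P, W P P = 0) :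
    HasIndependentFrame W E 0 := by
  refine ⟨Classical.arbitrary Ω, Fin.elim0, 0, fun P hP Q hQ => ?_, linearIndependent_empty_type⟩
  simp only [range_eq_empty, insert_empty_eq, mem_singleton_iff] at hP hQ
  simp [hP, hQ, hW]

theorem HasIndependentFrame.le_finrank [FiniteDimensional ℝ E] {m : ℕ}
    (h : HasIndependentFrame W E m) : m ≤ Module.finrank ℝ E := by
  obtain ⟨_, _, _, _, hli⟩ := h
  simpa using hli.fintype_card_le_finrank

theorem exists_maximal_independentFrame [FiniteDimensional ℝ E] (h₀ : HasIndependentFrame W E 0) :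
    ∃ m, HasIndependentFrame W E m ∧ ¬HasIndependentFrame W E (m + 1) := by
  by_contra! hstep
  have hall : ∀ m, HasIndependentFrame W E m := fun m => Nat.rec h₀ hstep m
  have := (hall (Module.finrank ℝ E + 1)).le_finrank
  omega

theorem sub_mem_span_of_not_hasIndependentFrame {m : ℕ} (hmax : ¬HasIndependentFrame W E (m + 1))
    {f : Ω → E} {S : Set Ω} (hf : IsometricOn W f S) {a₀ : Ω} {a : Fin m → Ω}
    (hframe : insert a₀ (range a) ⊆ S) (hli : LinearIndependent ℝ fun i => f (a i) - f a₀)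
    {R : Ω} (hR : R ∈ S) : f R - f a₀ ∈ span ℝ (range fun i => f (a i) - f a₀) := by
  by_contra hR'
  refine hmax ⟨a₀, Fin.cons R a, f, hf.mono ?_, ?_⟩
  · rw [Fin.range_cons, insert_comm]
    exact insert_subset hR hframe
  · have hcons : (fun i => f ((Fin.cons R a : Fin (m + 1) → Ω) i) - f a₀) =
        Fin.cons (f R - f a₀) fun i => f (a i) - f a₀ := by
      funext i
      cases i using Fin.cases <;> rfl
    rw [hcons]
    exact linearIndependent_finCons.2 ⟨hli, hR'⟩

theorem exists_pair_in_span_of_maximal_frame {m : ℕ} {a₀ : Ω} {a : Fin m → Ω} {g : Ω → E}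
    (hg : IsometricOn W g (insert a₀ (range a))) (hli : LinearIndependent ℝ fun i => g (a i) - g a₀)
    (hmax : ¬HasIndependentFrame W E (m + 1))
    (hloc : ∀ S : Set Ω, S.Finite → S.ncard ≤ m + 3 → ∃ f : Ω → E, IsometricOn W f S)
    (P Q : Ω) :
    ∃ y ∈ span ℝ (range fun i => g (a i) - g a₀), ∃ y' ∈ span ℝ (range fun i => g (a i) - g a₀),
      (∀ i, ⟪y, g (a i) - g a₀⟫ = W P a₀ + W (a i) a₀ - W P (a i)) ∧
      (∀ i, ⟪y', g (a i) - g a₀⟫ = W Q a₀ + W (a i) a₀ - W Q (a i)) ∧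
      W P Q = 1 / 2 * ‖y - y'‖ ^ 2 := by
  set S := insert a₀ (insert P (insert Q (range a)))
  have hcard : S.ncard ≤ m + 3 := by
    have hrange : (range a).ncard ≤ m := by
      simpa [← Nat.card_coe_set_eq] using Finite.card_range_le a
    have h₁ : S.ncard ≤ _ := ncard_insert_le _ _
    have h₂ := ncard_insert_le P (insert Q (range a))
    have h₃ := ncard_insert_le Q (range a)
    omega
  obtain ⟨f, hf⟩ := hloc S (toFinite S) hcard
  have hframe : insert a₀ (range a) ⊆ S := insert_subset_insert
    ((subset_insert _ _).trans (subset_insert _ _))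
  have hgram := hg.gram_eq (hf.mono hframe)
  have hli' : LinearIndependent ℝ fun i => f (a i) - f a₀ :=
    linearIndependent_of_posDef_gram (hgram ▸ posDef_gram_of_linearIndependent hli)
  have ha₀ : a₀ ∈ S := mem_insert _ _
  have hP : P ∈ S := mem_insert_of_mem _ (mem_insert _ _)
  have hQ : Q ∈ S := mem_insert_of_mem _ (mem_insert_of_mem _ (mem_insert _ _))
  have ha i : a i ∈ S := hframe (mem_insert_of_mem _ (mem_range_self i))
  obtain ⟨c, hc⟩ := mem_span_range_iff_exists_fun ℝ |>.1 <|
    sub_mem_span_of_not_hasIndependentFrame hmax hf hframe hli' hP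
  obtain ⟨d, hd⟩ := mem_span_range_iff_exists_fun ℝ |>.1 <|
    sub_mem_span_of_not_hasIndependentFrame hmax hf hframe hli' hQ
  refine ⟨_, mem_span_range_iff_exists_fun ℝ |>.2 ⟨c, rfl⟩,
    _, mem_span_range_iff_exists_fun ℝ |>.2 ⟨d, rfl⟩, fun i => ?_, fun i => ?_, ?_⟩
  · rw [inner_sum_smul_left_eq_of_gram_eq hgram, hc, hf.inner_sub_sub hP (ha i) ha₀]
  · rw [inner_sum_smul_left_eq_of_gram_eq hgram, hd, hf.inner_sub_sub hQ (ha i) ha₀]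
  · have := norm_sum_smul_eq_of_gram_eq hgram (c - d)
    simp only [Pi.sub_apply, sub_smul, Finset.sum_sub_distrib, hc, hd,
      sub_sub_sub_cancel_right] at this
    rw [this, hf P hP Q hQ]

theorem exists_isometric_of_maximal_frame {m : ℕ} {a₀ : Ω} {a : Fin m → Ω} {g : Ω → E}
    (hg : IsometricOn W g (insert a₀ (range a))) (hli : LinearIndependent ℝ fun i => g (a i) - g a₀)
    (hmax : ¬HasIndependentFrame W E (m + 1))
    (hloc : ∀ S : Set Ω, S.Finite → S.ncard ≤ m + 3 → ∃ f : Ω → E, IsometricOn W f S) :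
    ∃ x : Ω → E, ∀ P Q, W P Q = 1 / 2 * ‖x P - x Q‖ ^ 2 := by
  choose y hy y' hy' hyv hy'v hyy' using exists_pair_in_span_of_maximal_frame hg hli hmax hloc
  refine ⟨fun P => y P P, fun P Q => ?_⟩
  have hyP : y P Q = y P P :=
    eq_of_mem_span_of_inner_eq (hy P Q) (hy P P) fun i => (hyv P Q i).trans (hyv P P i).symm
  have hyQ : y' P Q = y Q Q :=
    eq_of_mem_span_of_inner_eq (hy' P Q) (hy Q Q) fun i => (hy'v P Q i).trans (hyv Q Q i).symm
  rw [hyy', hyP, hyQ]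

end Realization

theorem menger_embedding_criterion
    (Ω : Type) [Nonempty Ω] (n : ℕ) (W : Ω → Ω → ℝ)
    (hzero : ∀ P, W P P = 0) :
    (∃ f : Ω → EuclideanSpace ℝ (Fin n), Function.Injective f ∧
        ∀ P Q : Ω, W P Q = (1 / 2) * ‖f P - f Q‖ ^ 2) ↔
      (∀ Ω' : Set Ω, Ω'.Finite → Ω'.ncard ≤ n + 3 →
        ∃ f' : Ω' → EuclideanSpace ℝ (Fin n), Function.Injective f' ∧
          ∀ P Q : Ω', W P Q = (1 / 2) * ‖f' P - f' Q‖ ^ 2) := by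
  constructor
  · rintro ⟨f, hinj, hf⟩ Ω' - -
    exact ⟨fun P => f P, fun P Q h => Subtype.ext (hinj h), fun P Q => hf P Q⟩
  intro H
  obtain ⟨m, ⟨a₀, a, g, hg, hli⟩, hmax⟩ :=
    exists_maximal_independentFrame (hasIndependentFrame_zero (E := EuclideanSpace ℝ (Fin n)) hzero)
  have hmn : m ≤ n := by simpa using HasIndependentFrame.le_finrank ⟨a₀, a, g, hg, hli⟩
  obtain ⟨x, hx⟩ := exists_isometric_of_maximal_frame hg hli hmax fun S hS hcard =>
    let ⟨f, _, hf⟩ := H S hS (by omega)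
    exists_isometricOn_of_subtype f hf
  refine ⟨x, fun P Q hPQ => ?_, hx⟩
  have hP : P ∈ ({P, Q} : Set Ω) := mem_insert _ _
  have hQ : Q ∈ ({P, Q} : Set Ω) := mem_insert_of_mem _ rfl
  obtain ⟨f, hinj, hf⟩ := H {P, Q} (toFinite _) ((ncard_insert_le P {Q}).trans (by simp))
  have hfPQ : 1 / 2 * ‖f ⟨P, hP⟩ - f ⟨Q, hQ⟩‖ ^ 2 = 0 := by
    rw [← hf, hx, hPQ, sub_self, norm_zero]
    norm_num
  exact congrArg Subtype.val (hinj (by simpa [sub_eq_zero] using hfPQ))
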